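/- Let r ≥ 4 and let m, t be integers satisfying C(t−1,r) ≤ m ≤ C(t−1,r) + C(t−2,r−1) − [(2r−6)·2^{r−1} + 2^{r−3} + (r−4)(2r−7) − 1]·(C(t−2,r−2) − 1). Then there exists a left-compressed r-graph G on vertex set [t] with m edges that does not contain [t−1]^{(r)} as a subgraph, such that λ(G) = λ^{r−}_{(m,t−1,t)}, the maximum of the Lagrangian over all r-graphs with t vertices and m edges not containing a clique of order t−1. -/

import Mathlib

/-- `lagEval E x` is λ(G,x): the sum over the edges of `E` of the product of the
weights (under `x`) of their vertices. -/
def lagEval (E : Finset (Finset ℕ)) (x : ℕ → ℝ) : ℝ :=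
  ∑ e ∈ E, ∏ i ∈ e, x i

/-- A feasible weighting: nonnegative entries, finitely supported, total weight 1. -/
def Feasible (x : ℕ → ℝ) : Prop :=
  (∀ i, 0 ≤ x i) ∧ ∃ S : Finset ℕ, (∀ i ∉ S, x i = 0) ∧ ∑ i ∈ S, x i = 1

/-- A feasible weighting on the vertex set [n] = {1,…,n}. -/
def FeasibleOn (n : ℕ) (x : ℕ → ℝ) : Prop :=
  (∀ i, 0 ≤ x i) ∧ (∀ i ∉ Finset.Icc 1 n, x i = 0) ∧ ∑ i ∈ Finset.Icc 1 n, x i = 1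

/-- The Lagrangian λ(G) of a hypergraph with edge set `E`: the supremum (in fact
maximum) of λ(G,x) over all feasible weightings `x`. -/
noncomputable def lagrangian (E : Finset (Finset ℕ)) : ℝ :=
  sSup {y : ℝ | ∃ x : ℕ → ℝ, Feasible x ∧ lagEval E x = y}

/-- `completeG s r` is [s]^{(r)}, the complete r-graph on {1,…,s}. -/
def completeG (s r : ℕ) : Finset (Finset ℕ) :=
  (Finset.Icc 1 s).powersetCard r

/-- `E` is (the edge set of) an r-graph on the vertex set [n] = {1,…,n}. -/
def IsRGraphOn (r n : ℕ) (E : Finset (Finset ℕ)) : Prop :=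
  ∀ e ∈ E, e.card = r ∧ e ⊆ Finset.Icc 1 n

/-- The r-graph `E` contains a clique of order `s` (inside the vertex set `V`):
some `s`-element subset of `V` has all of its `r`-element subsets as edges. -/
def ContainsCliqueOn (V : Finset ℕ) (r s : ℕ) (E : Finset (Finset ℕ)) : Prop :=
  ∃ S : Finset ℕ, S ⊆ V ∧ S.card = s ∧ S.powersetCard r ⊆ E

/-- `DomLE A B`: `A` and `B` have the same size and, listing both in increasing
order as `i_1 < ⋯ < i_r` and `j_1 < ⋯ < j_r`, one has `i_k ≤ j_k` for all `k`
(equivalently, for every threshold `c`, `A` has at most as many elements above `c`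
as `B`). -/
def DomLE (A B : Finset ℕ) : Prop :=
  A.card = B.card ∧
    ∀ c : ℕ, (A.filter fun a => c < a).card ≤ (B.filter fun b => c < b).card

/-- `E` is left-compressed: together with any edge it contains every set of positive
integers dominating it from the left. -/
def LeftCompressed (E : Finset (Finset ℕ)) : Prop :=
  ∀ B ∈ E, ∀ A : Finset ℕ, (∀ a ∈ A, 1 ≤ a) → DomLE A B → A ∈ E

/-- `nbhd E i` is E_i, the (r-1)-neighborhood of the vertex `i`:
all sets `A` with `i ∉ A` and `A ∪ {i} ∈ E`. -/
def nbhd (E : Finset (Finset ℕ)) (i : ℕ) : Finset (Finset ℕ) :=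
  (E.filter fun e => i ∈ e).image fun e => e.erase i

/-- `nbhd2 E i j` is E_{ij}, the (r-2)-neighborhood of the pair of vertices `i, j`. -/
def nbhd2 (E : Finset (Finset ℕ)) (i j : ℕ) : Finset (Finset ℕ) :=
  (E.filter fun e => i ∈ e ∧ j ∈ e).image fun e => (e.erase i).erase j

/-- `C` consists of the first `m` r-element subsets of {1,2,3,…} in the colex
ordering: it has `m` edges, all of them r-element sets of positive integers, and it
is an initial segment for the colex order. -/
def IsColexSegment (r m : ℕ) (C : Finset (Finset ℕ)) : Prop :=
  C.card = m ∧ (∀ e ∈ C, e.card = r ∧ ∀ a ∈ e, 1 ≤ a) ∧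
    ∀ A B : Finset ℕ, A.card = r → (∀ a ∈ A, 1 ≤ a) → B ∈ C →
      (toColex A : Colex (Finset ℕ)) < toColex B → A ∈ C

/-!
Fix a weighting `x` and relabel `[t]` so that `x` decreases. Replacing an edge `B` by a missing
`r`-set `A` obtained from `B` by lowering one element does not decrease `λ(G, x)` and decreases
the total vertex sum, so some clique-free `m`-edge family `G` with `λ(F, x) ≤ λ(G, x)` admits no
such replacement that keeps it clique-free. Then every missing set `A` that can be raised into `G`
has a pivot `v`: the new `(t - 1)`-clique is `[t] \ {v}`, so `A` is the only missing `r`-set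
avoiding `v`. The upper bound on `m` leaves at least `C(t-2, r-2) + r + 2` missing sets, while a
case analysis on the pivot puts all but at most `r + 1` of them through two fixed vertices.
Hence nothing can be raised, `G` is left-compressed, and the left-compressed clique-free family
of largest Lagrangian attains `λ^{r-}_{(m,t-1,t)}`.
-/

open Finset

def SingleRaise (A B : Finset ℕ) : Prop :=
  ∃ a w, a ∈ A ∧ w ∉ A ∧ a < w ∧ B = insert w (A.erase a)

lemma card_filter_insert_of_notMem {α : Type*} [DecidableEq α] (p : α → Prop) [DecidablePred p]
    {A : Finset α} {w : α} (hw : w ∉ A) :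
    #((insert w A).filter p) = #(A.filter p) + if p w then 1 else 0 := by
  rw [filter_insert]
  split_ifs
  · exact card_insert_of_notMem fun h' => hw (mem_of_mem_filter _ h')
  · rfl

lemma card_filter_erase_add {α : Type*} [DecidableEq α] {p : α → Prop} [DecidablePred p]
    {A : Finset α} {a : α} (ha : a ∈ A) :
    #((A.erase a).filter p) + (if p a then 1 else 0) = #(A.filter p) := by
  rw [← card_filter_insert_of_notMem p (notMem_erase a A), insert_erase ha]

namespace DomLE

lemma trans {A B C : Finset ℕ} (h₁ : DomLE A B) (h₂ : DomLE B C) : DomLE A C :=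
  ⟨h₁.1.trans h₂.1, fun c => (h₁.2 c).trans (h₂.2 c)⟩

lemma insert_of_notMem {A B : Finset ℕ} {u : ℕ} (h : DomLE A B) (hA : u ∉ A) (hB : u ∉ B) :
    DomLE (insert u A) (insert u B) := by
  refine ⟨by rw [card_insert_of_notMem hA, card_insert_of_notMem hB, h.1], fun c => ?_⟩
  rw [card_filter_insert_of_notMem _ hA, card_filter_insert_of_notMem _ hB]
  exact Nat.add_le_add_right (h.2 c) _

lemma subset_Icc {A B : Finset ℕ} {t : ℕ} (h : DomLE A B) (hB : B ⊆ Icc 1 t)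
    (hA : ∀ a ∈ A, 1 ≤ a) : A ⊆ Icc 1 t := by
  intro a ha
  refine mem_Icc.2 ⟨hA a ha, not_lt.1 fun hta => ?_⟩
  have hB0 : B.filter (t < ·) = ∅ :=
    filter_eq_empty_iff.2 fun b hb => not_lt.2 (mem_Icc.1 (hB hb)).2
  have := h.2 t
  rw [hB0, card_empty, Nat.le_zero, card_eq_zero, filter_eq_empty_iff] at this
  exact this ha hta

end DomLE

lemma domLE_erase_of_le {S : Finset ℕ} {a b : ℕ} (ha : a ∈ S) (hb : b ∈ S) (hab : a ≤ b) :
    DomLE (S.erase b) (S.erase a) := by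
  refine ⟨by rw [card_erase_of_mem ha, card_erase_of_mem hb], fun c => ?_⟩
  have h₁ := card_filter_erase_add (p := (c < ·)) ha
  have h₂ := card_filter_erase_add (p := (c < ·)) hb
  split_ifs at h₁ h₂ <;> omega

lemma domLE_Icc_top {b : Finset ℕ} {n : ℕ} (hb : b ⊆ Icc 1 n) (hbn : #b ≤ n) :
    DomLE b (Icc (n + 1 - #b) n) := by
  refine ⟨by rw [Nat.card_Icc]; omega, fun c => ?_⟩
  have htop : (Icc (n + 1 - #b) n).filter (c < ·) = Icc (max (n + 1 - #b) (c + 1)) n := by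
    ext z
    simp only [mem_filter, mem_Icc, max_le_iff]
    omega
  have hb₁ : #(b.filter (c < ·)) ≤ #b := card_filter_le _ _
  have hb₂ : #(b.filter (c < ·)) ≤ n - c := by
    calc #(b.filter (c < ·)) ≤ #(Icc (c + 1) n) :=
          card_le_card fun z hz => by
            rw [mem_filter] at hz
            exact mem_Icc.2 ⟨hz.2, (mem_Icc.1 (hb hz.1)).2⟩
      _ = n - c := by rw [Nat.card_Icc]; omega
  rw [htop, Nat.card_Icc]
  omega

namespace SingleRaise

variable {A B : Finset ℕ}

lemma ne (h : SingleRaise A B) : A ≠ B := by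
  obtain ⟨a, w, -, hw, -, rfl⟩ := h
  exact fun hAB => hw (hAB ▸ mem_insert_self w _)

lemma card_eq (h : SingleRaise A B) : #B = #A := by
  obtain ⟨a, w, ha, hw, -, rfl⟩ := h
  rw [card_insert_of_notMem fun h' => hw (mem_of_mem_erase h'), card_erase_add_one ha]

lemma sum_lt (h : SingleRaise A B) : ∑ i ∈ A, i < ∑ i ∈ B, i := by
  obtain ⟨a, w, ha, hw, haw, rfl⟩ := h
  rw [sum_insert fun h' => hw (mem_of_mem_erase h'), ← add_sum_erase A _ ha]
  omega

lemma prod_le {x : ℕ → ℝ} {t : ℕ} (h : SingleRaise A B) (hx₀ : ∀ i, 0 ≤ x i)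
    (hx : AntitoneOn x (Set.Icc 1 t)) (hA : A ⊆ Icc 1 t) (hB : B ⊆ Icc 1 t) :
    ∏ i ∈ B, x i ≤ ∏ i ∈ A, x i := by
  obtain ⟨a, w, ha, hw, haw, rfl⟩ := h
  rw [prod_insert fun h' => hw (mem_of_mem_erase h'), ← mul_prod_erase A x ha]
  have hxw : x w ≤ x a := hx (by simpa using hA ha) (by simpa using hB (mem_insert_self w _))
    haw.le
  exact mul_le_mul_of_nonneg_right hxw (prod_nonneg fun i _ => hx₀ i)

end SingleRaise

lemma card_filter_lt_of_subset_of_mem {X Y : Finset ℕ} {c y : ℕ}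
    (hXY : ∀ z ∈ X, c < z → z ∈ Y) (hy : y ∈ Y) (hyX : y ∉ X) (hcy : c < y) :
    #(X.filter (c < ·)) < #(Y.filter (c < ·)) := by
  refine card_lt_card ((ssubset_iff_of_subset fun z hz => ?_).2 ⟨y, ?_, ?_⟩)
  · rw [mem_filter] at hz ⊢
    exact ⟨hXY z hz.1 hz.2, hz.2⟩
  · exact mem_filter.2 ⟨hy, hcy⟩
  · exact fun h => hyX (mem_of_mem_filter _ h)

/-- Replace the largest element of `B \ A` by the largest element of `A \ B`. -/
lemma DomLE.exists_singleRaise {A B : Finset ℕ} (h : DomLE A B) (hAB : A ≠ B) :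
    ∃ B', SingleRaise B' B ∧ DomLE A B' ∧ A ∩ B ⊆ B' ∧ B' ⊆ A ∪ B := by
  have hBA : (B \ A).Nonempty :=
    sdiff_nonempty.2 fun hc => hAB (eq_of_subset_of_card_le hc h.1.le).symm
  have hAB' : (A \ B).Nonempty :=
    sdiff_nonempty.2 fun hc => hAB (eq_of_subset_of_card_le hc h.1.ge)
  obtain ⟨b, hb, hB_le⟩ := exists_max_image (B \ A) id hBA
  obtain ⟨a, ha, hA_le⟩ := exists_max_image (A \ B) id hAB'
  obtain ⟨hbB, hbA⟩ := mem_sdiff.1 hb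
  obtain ⟨haA, haB⟩ := mem_sdiff.1 ha
  replace hA_le : ∀ z ∈ A, z ∉ B → z ≤ a := fun z hz hz' => hA_le z (mem_sdiff.2 ⟨hz, hz'⟩)
  replace hB_le : ∀ z ∈ B, z ∉ A → z ≤ b := fun z hz hz' => hB_le z (mem_sdiff.2 ⟨hz, hz'⟩)
  have hab : a < b := by
    refine lt_of_le_of_ne (not_lt.1 fun hba => ?_) fun hab => hbA (hab ▸ haA)
    have := card_filter_lt_of_subset_of_mem (c := b)
      (fun z hz hbz => by_contra fun hzA => (hB_le z hz hzA).not_gt hbz) haA haB hba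
    exact (h.2 b).not_gt this
  have hgap : ∀ c, a ≤ c → c < b → #(A.filter (c < ·)) < #(B.filter (c < ·)) := fun c hac hcb =>
    card_filter_lt_of_subset_of_mem
      (fun z hz hcz => by_contra fun hzB => (hA_le z hz hzB).not_gt (hac.trans_lt hcz))
      hbB hbA hcb
  have haB' : a ∉ B.erase b := fun h' => haB (mem_of_mem_erase h')
  refine ⟨insert a (B.erase b), ⟨a, b, mem_insert_self a _, ?_, hab, ?_⟩, ⟨?_, fun c => ?_⟩,
    fun z hz => ?_, ?_⟩
  · rw [mem_insert, not_or]
    exact ⟨hab.ne', notMem_erase b B⟩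
  · rw [erase_insert haB', insert_erase hbB]
  · rw [card_insert_of_notMem haB', card_erase_add_one hbB, h.1]
  · rw [card_filter_insert_of_notMem _ haB']
    have hB := card_filter_erase_add (p := (c < ·)) hbB
    have hc := h.2 c
    by_cases hca : c < a
    · simp only [hca, hca.trans hab, if_true] at hB ⊢
      omega
    · by_cases hcb : c < b
      · have := hgap c (not_lt.1 hca) hcb
        simp only [hca, hcb, if_true, if_false] at hB ⊢
        omega
      · simp only [hca, hcb, if_false] at hB ⊢
        omega
  · obtain ⟨hzA, hzB⟩ := mem_inter.1 hz
    exact mem_insert_of_mem (mem_erase.2 ⟨fun hzb => hbA (hzb ▸ hzA), hzB⟩)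
  · exact insert_subset (mem_union_left _ haA) ((erase_subset b B).trans subset_union_right)

lemma DomLE.exists_singleRaise_boundary {G : Finset (Finset ℕ)} {A B : Finset ℕ}
    (h : DomLE A B) (hA : A ∉ G) (hB : B ∈ G) :
    ∃ A' B', SingleRaise A' B' ∧ A' ∉ G ∧ B' ∈ G ∧ A ∩ B ⊆ A' ∧ A' ⊆ A ∪ B := by
  induction hn : ∑ i ∈ B, i using Nat.strong_induction_on generalizing B with
  | _ n ih =>
  obtain ⟨B', hB'B, hAB', hinter, hunion⟩ := h.exists_singleRaise fun hAB => hA (hAB ▸ hB)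
  by_cases hB' : B' ∈ G
  · obtain ⟨A', B'', hr, hA', hB'', hinter', hunion'⟩ :=
      ih _ (hn ▸ hB'B.sum_lt) hAB' hB' rfl
    refine ⟨A', B'', hr, hA', hB'', fun z hz => hinter' ?_, hunion'.trans ?_⟩
    · exact mem_inter.2 ⟨(mem_inter.1 hz).1, hinter hz⟩
    · exact union_subset subset_union_left hunion
  · exact ⟨B', B, hB'B, hB', hB, hinter, hunion⟩

lemma mem_completeG {n r : ℕ} {s : Finset ℕ} : s ∈ completeG n r ↔ s ⊆ Icc 1 n ∧ #s = r :=
  mem_powersetCard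

lemma card_completeG (n r : ℕ) : #(completeG n r) = n.choose r := by
  rw [completeG, card_powersetCard, Nat.card_Icc, Nat.add_sub_cancel]

lemma isRGraphOn_iff_subset_completeG {r n : ℕ} {E : Finset (Finset ℕ)} :
    IsRGraphOn r n E ↔ E ⊆ completeG n r :=
  ⟨fun h e he => mem_completeG.2 (h e he).symm, fun h _ he => (mem_completeG.1 (h he)).symm⟩

lemma ContainsCliqueOn.exists_erase {V : Finset ℕ} {r s : ℕ} {H : Finset (Finset ℕ)}
    (h : ContainsCliqueOn V r s H) (hs : s + 1 = #V) :
    ∃ v ∈ V, (V.erase v).powersetCard r ⊆ H := by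
  obtain ⟨S, hSV, hS, hSH⟩ := h
  obtain ⟨v, hvV, hvS⟩ := not_subset.1 fun hVS : V ⊆ S => by
    have := card_le_card hVS
    omega
  have hSeq : S = V.erase v :=
    eq_of_subset_of_card_le (subset_erase.2 ⟨hSV, hvS⟩) (by rw [card_erase_of_mem hvV]; omega)
  exact ⟨v, hvV, hSeq ▸ hSH⟩

lemma not_containsCliqueOn_of_disjoint {r t : ℕ} {G : Finset (Finset ℕ)} (hrt : r < t)
    (hG : Disjoint G (completeG (r + 1) r)) : ¬ContainsCliqueOn (Icc 1 t) r (t - 1) G := by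
  intro h
  obtain ⟨v, -, hv⟩ := h.exists_erase (by rw [Nat.card_Icc]; omega)
  obtain ⟨χ, hχ, hχr⟩ := exists_subset_card_eq (s := (Icc 1 (r + 1)).erase v) (n := r) (by
    have := pred_card_le_card_erase (s := Icc 1 (r + 1)) (a := v)
    rw [Nat.card_Icc] at this
    omega)
  have hχt : χ ⊆ (Icc 1 t).erase v := hχ.trans (erase_subset_erase v (Icc_subset_Icc_right hrt))
  exact disjoint_left.1 hG (hv (mem_powersetCard.2 ⟨hχt, hχr⟩))
    (mem_completeG.2 ⟨hχ.trans (erase_subset v _), hχr⟩)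

lemma exists_card_eq_not_containsCliqueOn {r t m : ℕ} (hrt : r < t)
    (hm : m + (r + 1) ≤ t.choose r) :
    ∃ G ⊆ completeG t r, #G = m ∧ ¬ContainsCliqueOn (Icc 1 t) r (t - 1) G := by
  have hsub : completeG (r + 1) r ⊆ completeG t r :=
    powersetCard_mono (Icc_subset_Icc_right hrt)
  obtain ⟨G, hG, hGm⟩ := exists_subset_card_eq (s := completeG t r \ completeG (r + 1) r) (n := m)
    (by
      rw [card_sdiff_of_subset hsub, card_completeG, card_completeG, Nat.choose_succ_self_right]
      omega)
  exact ⟨G, hG.trans sdiff_subset, hGm,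
    not_containsCliqueOn_of_disjoint hrt (disjoint_of_subset_left hG sdiff_disjoint)⟩

lemma card_le_card_add_choose {r t v w : ℕ} {M X : Finset (Finset ℕ)} (hM : M ⊆ completeG t r)
    (hv : v ∈ Icc 1 t) (hw : w ∈ Icc 1 t) (hvw : v ≠ w)
    (h : ∀ χ ∈ M, χ ∉ X → v ∈ χ ∧ w ∈ χ) : #M ≤ #X + (t - 2).choose (r - 2) := by
  set P := M.filter fun χ => v ∈ χ ∧ w ∈ χ
  have hMP : M ⊆ X ∪ P := fun χ hχ => by
    by_cases hχX : χ ∈ X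
    · exact mem_union_left _ hχX
    · exact mem_union_right _ (mem_filter.2 ⟨hχ, h χ hχ hχX⟩)
  have hvw' : {v, w} ⊆ Icc 1 t := insert_subset hv (singleton_subset_iff.2 hw)
  have hP : #P ≤ (t - 2).choose (r - 2) := by
    have := card_le_card_of_injOn (t := (Icc 1 t \ {v, w}).powersetCard (r - 2))
      (s := P) (· \ {v, w}) (fun χ hχ => ?_)
      (fun χ₁ hχ₁ χ₂ hχ₂ (h₁₂ : χ₁ \ {v, w} = χ₂ \ {v, w}) => ?_)
    · rwa [card_powersetCard, card_sdiff_of_subset hvw', card_pair hvw, Nat.card_Icc,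
        Nat.add_sub_cancel] at this
    · obtain ⟨hχM, hvχ, hwχ⟩ := mem_filter.1 hχ
      obtain ⟨hχt, hχr⟩ := mem_completeG.1 (hM hχM)
      refine mem_powersetCard.2 ⟨sdiff_subset_sdiff hχt le_rfl, ?_⟩
      rw [card_sdiff_of_subset (insert_subset hvχ (singleton_subset_iff.2 hwχ)), card_pair hvw, hχr]
    · have hsub : ∀ χ ∈ P, {v, w} ⊆ χ := fun χ hχ =>
        have hχ' := (mem_filter.1 hχ).2
        insert_subset hχ'.1 (singleton_subset_iff.2 hχ'.2)
      rw [← sdiff_union_of_subset (hsub χ₁ hχ₁), ← sdiff_union_of_subset (hsub χ₂ hχ₂), h₁₂]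
  calc #M ≤ #(X ∪ P) := card_le_card hMP
    _ ≤ #X + #P := card_union_le X P
    _ ≤ #X + (t - 2).choose (r - 2) := by omega

def IsPivot (M : Finset (Finset ℕ)) (A : Finset ℕ) (v : ℕ) : Prop :=
  v ∉ A ∧ ∀ χ ∈ M, χ ≠ A → v ∈ χ

lemma IsPivot.eq {r t v v' : ℕ} {M : Finset (Finset ℕ)} {A A' : Finset ℕ}
    (hM : M ⊆ completeG t r) (hcard : (t - 2).choose (r - 2) + 3 ≤ #M)
    (hA : A ∈ M) (hA' : A' ∈ M) (hv : IsPivot M A v) (hv' : IsPivot M A' v') : A = A' := by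
  by_contra hAA'
  have hvA' : v ∈ A' := hv.2 A' hA' (Ne.symm hAA')
  have hv'A : v' ∈ A := hv'.2 A hA hAA'
  have := card_le_card_add_choose (X := {A, A'}) hM ((mem_completeG.1 (hM hA')).1 hvA')
    ((mem_completeG.1 (hM hA)).1 hv'A) (fun hvv' => hv.1 (hvv' ▸ hv'A)) fun χ hχ hχX => by
      rw [mem_insert, mem_singleton, not_or] at hχX
      exact ⟨hv.2 χ hχ hχX.1, hv'.2 χ hχ hχX.2⟩
  have := card_insert_le A {A'}
  rw [card_singleton] at this
  omega

lemma exists_isPivot_of_containsCliqueOn {r t : ℕ} {G : Finset (Finset ℕ)} {A B : Finset ℕ}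
    (ht : 0 < t) (hG : ¬ContainsCliqueOn (Icc 1 t) r (t - 1) G) (hA : A ∉ G) (hB : B ∈ G)
    (hBt : B ∈ completeG t r)
    (h : ContainsCliqueOn (Icc 1 t) r (t - 1) (insert A (G.erase B))) :
    ∃ v ∈ B, IsPivot (completeG t r \ G) A v := by
  obtain ⟨v, hv, hvH⟩ := h.exists_erase (by rw [Nat.card_Icc]; omega)
  have hmem : ∀ χ ∈ completeG t r, v ∉ χ → χ = A ∨ χ ∈ G := fun χ hχ hvχ => by
    obtain ⟨hχt, hχr⟩ := mem_completeG.1 hχ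
    rcases mem_insert.1 (hvH (mem_powersetCard.2 ⟨subset_erase.2 ⟨hχt, hvχ⟩, hχr⟩)) with h | h
    · exact Or.inl h
    · exact Or.inr (mem_of_mem_erase h)
  have hvA : v ∉ A := fun hvA => hG ⟨(Icc 1 t).erase v, erase_subset v _,
    by rw [card_erase_of_mem hv, Nat.card_Icc, Nat.add_sub_cancel], fun χ hχ => by
      obtain ⟨hχt, hχr⟩ := mem_powersetCard.1 hχ
      rcases mem_insert.1 (hvH hχ) with rfl | h
      · exact absurd ((mem_erase.1 (hχt hvA)).1) (not_not.2 rfl)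
      · exact mem_of_mem_erase h⟩
  refine ⟨v, by_contra fun hvB => ?_, hvA, fun χ hχ hχA => by_contra fun hvχ => ?_⟩
  · rcases mem_insert.1 (hvH (mem_powersetCard.2
      ⟨subset_erase.2 ⟨(mem_completeG.1 hBt).1, hvB⟩, (mem_completeG.1 hBt).2⟩)) with h | h
    · exact hA (h ▸ hB)
    · exact notMem_erase B G h
  · obtain ⟨hχt, hχG⟩ := mem_sdiff.1 hχ
    exact (hmem χ hχt hvχ).elim hχA hχG

lemma exists_singleRaise_of_ne_Icc {A : Finset ℕ} {n : ℕ} (hA : A ⊆ Icc 1 n)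
    (hne : A ≠ Icc (n + 1 - #A) n) : ∃ a ∈ A, ∃ w ∈ Icc 1 n, w ∉ A ∧ a < w := by
  by_contra! hup
  rcases A.eq_empty_or_nonempty with rfl | hAne
  · exact hne (by simp)
  obtain ⟨a₀, ha₀, hmin⟩ := exists_min_image A id hAne
  have ha₀n := (mem_Icc.1 (hA ha₀)).2
  have hAeq : A = Icc a₀ n := by
    refine Subset.antisymm (fun z hz => mem_Icc.2 ⟨hmin z hz, (mem_Icc.1 (hA hz)).2⟩)
      fun z hz => ?_
    obtain ⟨h₁, h₂⟩ := mem_Icc.1 hz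
    rcases h₁.eq_or_lt with rfl | hlt
    · exact ha₀
    · refine by_contra fun hzA => (hup _ ha₀ z (mem_Icc.2 ⟨?_, h₂⟩) hzA).not_gt hlt
      exact (mem_Icc.1 (hA ha₀)).1.trans hlt.le
  refine hne ?_
  rw [hAeq, Nat.card_Icc]
  congr 1
  omega

section Pivots

variable {r t : ℕ} {G : Finset (Finset ℕ)} {A : Finset ℕ}

/-- Every missing set other than `A` contains `t - 1` and `t`, or is `A` with one element
replaced by `v`. -/
lemma card_sdiff_le_of_isPivot_lt {v : ℕ}
    (huniq : ∀ χ ∈ completeG t r \ G, ∀ B ∈ G, SingleRaise χ B → χ = A)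
    (hA : A ∈ completeG t r \ G) (hv : IsPivot (completeG t r \ G) A v) (hvt : v ∈ Icc 1 (t - 1)) :
    #(completeG t r \ G) ≤ r + 1 + (t - 2).choose (r - 2) := by
  obtain ⟨hv₁, hvt⟩ := mem_Icc.1 hvt
  set X := insert A (A.image fun w => insert v (A.erase w))
  have hX : #X ≤ r + 1 := by
    calc #X ≤ #(A.image fun w => insert v (A.erase w)) + 1 := card_insert_le _ _
      _ ≤ #A + 1 := by gcongr; exact card_image_le
      _ = r + 1 := by rw [(mem_completeG.1 (mem_sdiff.1 hA).1).2]
  refine le_trans (card_le_card_add_choose (X := X) sdiff_subset (v := t - 1) (w := t)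
    (mem_Icc.2 ⟨by omega, by omega⟩) (mem_Icc.2 ⟨by omega, le_rfl⟩) (by omega)
    fun χ hχ hχX => by_contra fun htχ => ?_) (by omega)
  obtain ⟨hχt, hχG⟩ := mem_sdiff.1 hχ
  obtain ⟨hχsub, hχr⟩ := mem_completeG.1 hχt
  have hχA : χ ≠ A := fun h => hχX (h ▸ mem_insert_self A _)
  have hvχ : v ∈ χ := hv.2 χ hχ hχA
  obtain ⟨w, hwχ, hvw, hwt⟩ : ∃ w, w ∉ χ ∧ v < w ∧ w ≤ t := by
    by_cases ht : t ∈ χ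
    · have ht₁ : t - 1 ∉ χ := fun h => htχ ⟨h, ht⟩
      exact ⟨t - 1, ht₁, lt_of_le_of_ne hvt fun h => ht₁ (h ▸ hvχ), by omega⟩
    · exact ⟨t, ht, by omega, le_rfl⟩
  have hraise : SingleRaise χ (insert w (χ.erase v)) := ⟨v, w, hvχ, hwχ, hvw, rfl⟩
  have hχ't : insert w (χ.erase v) ∈ completeG t r := mem_completeG.2
    ⟨insert_subset (mem_Icc.2 ⟨by omega, hwt⟩) ((erase_subset v χ).trans hχsub),
      by rw [hraise.card_eq, hχr]⟩
  by_cases hχ'G : insert w (χ.erase v) ∈ G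
  · exact hχA (huniq χ hχ _ hχ'G hraise)
  have hχ'A : insert w (χ.erase v) = A := by_contra fun h =>
    (mem_insert.1 (hv.2 _ (mem_sdiff.2 ⟨hχ't, hχ'G⟩) h)).elim hvw.ne (notMem_erase v χ)
  refine hχX (mem_insert_of_mem (mem_image.2 ⟨w, hχ'A ▸ mem_insert_self w _, ?_⟩))
  rw [← hχ'A, erase_insert fun h => hwχ (mem_of_mem_erase h), insert_erase hvχ]

lemma exists_singleRaise_sdiff (hG : G ⊆ completeG t r) {A B : Finset ℕ} (h : DomLE A B)
    (hA : A ∈ completeG t r \ G) (hB : B ∈ G) :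
    ∃ A' ∈ completeG t r \ G, ∃ B' ∈ G, SingleRaise A' B' ∧ A ∩ B ⊆ A' := by
  obtain ⟨A', B', hr, hA', hB', hinter, hunion⟩ :=
    h.exists_singleRaise_boundary (mem_sdiff.1 hA).2 hB
  have hAt := mem_completeG.1 (mem_sdiff.1 hA).1
  have hBt := mem_completeG.1 (hG hB)
  have hA't : A' ∈ completeG t r := mem_completeG.2 ⟨hunion.trans (union_subset hAt.1 hBt.1),
    by rw [← hr.card_eq, (mem_completeG.1 (hG hB')).2]⟩
  exact ⟨A', mem_sdiff.2 ⟨hA't, hA'⟩, B', hB', hr, hinter⟩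

/-- Otherwise `χ` is dominated by `B`, and a chain of single raises from `χ` to `B` would
produce a second raisable missing set, one containing `t`. -/
lemma mem_of_isPivot_top_of_eq_Icc {B : Finset ℕ} (hrt : r < t) (hG : G ⊆ completeG t r)
    (huniq : ∀ χ ∈ completeG t r \ G, ∀ B ∈ G, SingleRaise χ B → χ = A)
    (hB : B ∈ G) (hAB : SingleRaise A B) (htop : A = Icc (t - r) (t - 1))
    (ht : IsPivot (completeG t r \ G) A t) {χ : Finset ℕ} (hχ : χ ∈ completeG t r \ G)
    (hχA : χ ≠ A) : t - 1 ∈ χ := by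
  by_contra ht₁
  obtain ⟨a, w, ha, hw, haw, rfl⟩ := hAB
  have haI := mem_Icc.1 (htop ▸ ha)
  have hwt : w = t := by
    have := (mem_Icc.1 ((mem_completeG.1 (hG hB)).1 (mem_insert_self w _))).2
    by_contra hwt
    exact hw (htop ▸ mem_Icc.2 ⟨by omega, by omega⟩)
  rw [hwt] at hB
  obtain ⟨hχsub, hχr⟩ := mem_completeG.1 (mem_sdiff.1 hχ).1
  have htχ : t ∈ χ := ht.2 χ hχ hχA
  have hχ' : χ.erase t ⊆ Icc 1 (t - 2) := fun z hz => by
    obtain ⟨hzt, hzχ⟩ := mem_erase.1 hz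
    have hzt₁ : z ≠ t - 1 := fun h => ht₁ (h ▸ hzχ)
    have := mem_Icc.1 (hχsub hzχ)
    exact mem_Icc.2 ⟨this.1, by omega⟩
  have hχ'r : #(χ.erase t) = r - 1 := by rw [card_erase_of_mem htχ, hχr]
  have hlow : Icc (t - 2 + 1 - #(χ.erase t)) (t - 2) = A.erase (t - 1) := by
    ext z
    rw [hχ'r, htop, mem_erase, mem_Icc, mem_Icc]
    omega
  have hdom : DomLE χ (insert t (A.erase a)) := by
    have h₁ := domLE_Icc_top hχ' (by rw [hχ'r]; omega)
    rw [hlow] at h₁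
    have h₂ := domLE_erase_of_le ha (htop ▸ mem_Icc.2 ⟨by omega, le_rfl⟩) haI.2
    simpa only [insert_erase htχ] using
      (h₁.trans h₂).insert_of_notMem (notMem_erase t χ) fun h => ht.1 (mem_of_mem_erase h)
  obtain ⟨A', hA', B', hB', hr', hinter⟩ := exists_singleRaise_sdiff hG hdom hχ hB
  have htA' : t ∈ A' := hinter (mem_inter.2 ⟨htχ, mem_insert_self t _⟩)
  exact ht.1 (huniq A' hA' B' hB' hr' ▸ htA')

/-- All missing sets but `A` contain `t` and a second vertex: `t - 1` if `A` is the top `r`-set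
of `[t - 1]`, otherwise the pivot of a raise of `A` inside `[t - 1]`. -/
lemma card_sdiff_le_of_isPivot_top {B : Finset ℕ} (hrt : r < t) (hG : G ⊆ completeG t r)
    (hpiv : ∀ χ ∈ completeG t r \ G, ∀ B ∈ G, SingleRaise χ B →
      ∃ v ∈ B, IsPivot (completeG t r \ G) χ v)
    (huniq : ∀ χ ∈ completeG t r \ G, ∀ B ∈ G, SingleRaise χ B → χ = A)
    (hA : A ∈ completeG t r \ G) (hB : B ∈ G) (hAB : SingleRaise A B)
    (ht : IsPivot (completeG t r \ G) A t) :
    #(completeG t r \ G) ≤ 1 + (t - 2).choose (r - 2) := by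
  obtain ⟨hAsub, hAr⟩ := mem_completeG.1 (mem_sdiff.1 hA).1
  have hAsub' : A ⊆ Icc 1 (t - 1) := fun z hz => by
    have := mem_Icc.1 (hAsub hz)
    exact mem_Icc.2 ⟨this.1, by have : z ≠ t := fun h => ht.1 (h ▸ hz); omega⟩
  obtain ⟨u, hu, hut, huχ⟩ : ∃ u ∈ Icc 1 t, u ≠ t ∧
      ∀ χ ∈ completeG t r \ G, χ ≠ A → u ∈ χ := by
    by_cases htop : A = Icc (t - r) (t - 1)
    · obtain ⟨a, -, ha, -⟩ := id hAB
      have := mem_Icc.1 (hAsub' ha)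
      exact ⟨t - 1, mem_Icc.2 ⟨by omega, by omega⟩, by omega,
        fun χ hχ hχA => mem_of_isPivot_top_of_eq_Icc hrt hG huniq hB hAB htop ht hχ hχA⟩
    obtain ⟨a, ha, w, hw, hwA, haw⟩ := exists_singleRaise_of_ne_Icc hAsub'
      (by rwa [hAr, show t - 1 + 1 - r = t - r by omega])
    have hraise : SingleRaise A (insert w (A.erase a)) := ⟨a, w, ha, hwA, haw, rfl⟩
    have hB'sub : insert w (A.erase a) ⊆ Icc 1 (t - 1) :=
      insert_subset hw ((erase_subset a A).trans hAsub')
    have hB'G : insert w (A.erase a) ∈ G := by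
      by_contra hB'G
      have hB't : insert w (A.erase a) ∈ completeG t r := mem_completeG.2
        ⟨hB'sub.trans (Icc_subset_Icc_right (Nat.sub_le t 1)), by rw [hraise.card_eq, hAr]⟩
      have := mem_Icc.1 (hB'sub (ht.2 _ (mem_sdiff.2 ⟨hB't, hB'G⟩) hraise.ne.symm))
      omega
    obtain ⟨v, hv, hvA⟩ := hpiv A hA _ hB'G hraise
    have := mem_Icc.1 (hB'sub hv)
    exact ⟨v, mem_Icc.2 ⟨this.1, by omega⟩, by omega, hvA.2⟩
  have := card_le_card_add_choose (X := {A}) sdiff_subset hu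
    (mem_Icc.2 ⟨by omega, le_rfl⟩) hut fun χ hχ hχA =>
      ⟨huχ χ hχ (by simpa using hχA), ht.2 χ hχ (by simpa using hχA)⟩
  rwa [card_singleton] at this

end Pivots

lemma leftCompressed_of_forall_not_singleRaise {r t : ℕ} {G : Finset (Finset ℕ)}
    (hG : G ⊆ completeG t r) (h : ∀ A ∈ completeG t r \ G, ∀ B ∈ G, ¬SingleRaise A B) :
    LeftCompressed G := by
  intro B hB A hA₁ hAB
  by_contra hAG
  have hBt := mem_completeG.1 (hG hB)
  have hAt : A ∈ completeG t r := mem_completeG.2 ⟨hAB.subset_Icc hBt.1 hA₁, hAB.1.trans hBt.2⟩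
  obtain ⟨A', hA', B', hB', hr, -⟩ := exists_singleRaise_sdiff hG hAB (mem_sdiff.2 ⟨hAt, hAG⟩) hB
  exact h A' hA' B' hB' hr

lemma leftCompressed_of_forall_singleRaise_containsCliqueOn {r t : ℕ} {G : Finset (Finset ℕ)}
    (hrt : r < t) (hG : G ⊆ completeG t r) (hcf : ¬ContainsCliqueOn (Icc 1 t) r (t - 1) G)
    (hM : (t - 2).choose (r - 2) + r + 2 ≤ #(completeG t r \ G))
    (hst : ∀ A ∈ completeG t r \ G, ∀ B ∈ G, SingleRaise A B →
      ContainsCliqueOn (Icc 1 t) r (t - 1) (insert A (G.erase B))) :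
    LeftCompressed G := by
  have hpiv : ∀ A ∈ completeG t r \ G, ∀ B ∈ G, SingleRaise A B →
      ∃ v ∈ B, IsPivot (completeG t r \ G) A v := fun A hA B hB hAB =>
    exists_isPivot_of_containsCliqueOn (by omega) hcf (mem_sdiff.1 hA).2 hB (hG hB)
      (hst A hA B hB hAB)
  have hr : 0 < r := Nat.pos_of_ne_zero fun hr => by
    have h₁ := card_le_card (sdiff_subset (s := completeG t r) (t := G))
    have h₂ : t.choose r = 1 := by rw [hr, Nat.choose_zero_right]
    rw [card_completeG] at h₁
    omega
  refine leftCompressed_of_forall_not_singleRaise hG fun A hA B hB hAB => ?_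
  obtain ⟨v, hvB, hv⟩ := hpiv A hA B hB hAB
  have huniq : ∀ χ ∈ completeG t r \ G, ∀ B' ∈ G, SingleRaise χ B' → χ = A :=
    fun χ hχ B' hB' hχB' => by
      obtain ⟨v', -, hv'⟩ := hpiv χ hχ B' hB' hχB'
      exact IsPivot.eq sdiff_subset (by omega) hχ hA hv' hv
  have hvt := mem_Icc.1 ((mem_completeG.1 (hG hB)).1 hvB)
  rcases hvt.2.lt_or_eq with hlt | rfl
  · have := card_sdiff_le_of_isPivot_lt huniq hA hv (mem_Icc.2 ⟨hvt.1, by omega⟩)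
    omega
  · have := card_sdiff_le_of_isPivot_top hrt hG hpiv huniq hA hB hAB hv
    omega

lemma sum_insert_erase_add {α M : Type*} [DecidableEq α] [AddCommMonoid M] (f : α → M)
    {s : Finset α} {a b : α} (ha : a ∉ s) (hb : b ∈ s) :
    ∑ x ∈ insert a (s.erase b), f x + f b = ∑ x ∈ s, f x + f a := by
  rw [sum_insert fun h => ha (mem_of_mem_erase h), add_assoc, sum_erase_add s f hb, add_comm]

/-- Lowering an edge does not decrease `λ(·, x)` for `x` decreasing on `[t]`, and decreases the
total vertex sum; so a family of minimal vertex sum among those with `λ(F, x) ≤ λ(G, x)`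
cannot be lowered without creating a `(t - 1)`-clique. -/
lemma exists_leftCompressed_lagEval_le {r t : ℕ} {F : Finset (Finset ℕ)} (hrt : r < t)
    (hF : F ⊆ completeG t r) (hcf : ¬ContainsCliqueOn (Icc 1 t) r (t - 1) F)
    (hM : (t - 2).choose (r - 2) + r + 2 ≤ #(completeG t r \ F)) {x : ℕ → ℝ}
    (hx₀ : ∀ i, 0 ≤ x i) (hx : AntitoneOn x (Set.Icc 1 t)) :
    ∃ G ⊆ completeG t r, #G = #F ∧ ¬ContainsCliqueOn (Icc 1 t) r (t - 1) G ∧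
      LeftCompressed G ∧ lagEval F x ≤ lagEval G x := by
  classical
  set S := (completeG t r).powerset.filter fun G =>
    #G = #F ∧ ¬ContainsCliqueOn (Icc 1 t) r (t - 1) G ∧ lagEval F x ≤ lagEval G x
  obtain ⟨G, hGS, hmin⟩ := S.exists_min_image (fun G => ∑ e ∈ G, ∑ i ∈ e, i)
    ⟨F, mem_filter.2 ⟨mem_powerset.2 hF, rfl, hcf, le_rfl⟩⟩
  obtain ⟨hG, hGF, hGcf, hFG⟩ := mem_filter.1 hGS
  rw [mem_powerset] at hG
  have hGM : #(completeG t r \ G) = #(completeG t r \ F) := by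
    rw [card_sdiff_of_subset hG, card_sdiff_of_subset hF, hGF]
  refine ⟨G, hG, hGF, hGcf, leftCompressed_of_forall_singleRaise_containsCliqueOn hrt hG hGcf
    (hGM ▸ hM) fun A hA B hB hAB => by_contra fun hcf' => ?_, hFG⟩
  obtain ⟨hAt, hAG⟩ := mem_sdiff.1 hA
  have hlag := sum_insert_erase_add (fun e => ∏ i ∈ e, x i) hAG hB
  have hsum := sum_insert_erase_add (fun e => ∑ i ∈ e, i) hAG hB
  have hprod := hAB.prod_le hx₀ hx (mem_completeG.1 hAt).1 (mem_completeG.1 (hG hB)).1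
  have hS : insert A (G.erase B) ∈ S := by
    refine mem_filter.2 ⟨mem_powerset.2 (insert_subset hAt ((erase_subset B G).trans hG)), ?_,
      hcf', hFG.trans ?_⟩
    · rw [card_insert_of_notMem fun h => hAG (mem_of_mem_erase h), card_erase_add_one hB, hGF]
    · unfold lagEval
      linarith
  have := hmin _ hS
  have := hAB.sum_lt
  omega

lemma Feasible.le_one {x : ℕ → ℝ} (hx : Feasible x) (i : ℕ) : x i ≤ 1 := by
  obtain ⟨hx₀, S, hS₀, hS₁⟩ := hx
  by_cases hi : i ∈ S
  · exact hS₁ ▸ single_le_sum (fun j _ => hx₀ j) hi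
  · rw [hS₀ i hi]
    exact zero_le_one

lemma Feasible.comp_perm {x : ℕ → ℝ} (hx : Feasible x) (σ : Equiv.Perm ℕ) : Feasible (x ∘ σ) := by
  obtain ⟨hx₀, S, hS₀, hS₁⟩ := hx
  refine ⟨fun i => hx₀ (σ i), S.map σ.symm.toEmbedding, fun i hi => hS₀ _ ?_, ?_⟩
  · rwa [mem_map_equiv, Equiv.symm_symm] at hi
  · simpa [sum_map] using hS₁

lemma exists_feasible : ∃ x : ℕ → ℝ, Feasible x :=
  ⟨Pi.single 0 1, fun i => by by_cases hi : i = 0 <;> simp [hi],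
    {0}, fun i hi => by simp_all, by simp⟩

lemma bddAbove_lagEval (E : Finset (Finset ℕ)) :
    BddAbove {y : ℝ | ∃ x : ℕ → ℝ, Feasible x ∧ lagEval E x = y} := by
  refine ⟨#E, ?_⟩
  rintro _ ⟨x, hx, rfl⟩
  simpa [lagEval] using sum_le_card_nsmul E _ 1 fun e _ =>
    prod_le_one (fun i _ => hx.1 i) fun i _ => hx.le_one i

lemma lagEval_le_lagrangian (E : Finset (Finset ℕ)) {x : ℕ → ℝ} (hx : Feasible x) :
    lagEval E x ≤ lagrangian E :=
  le_csSup (bddAbove_lagEval E) ⟨x, hx, rfl⟩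

lemma lagrangian_le {E : Finset (Finset ℕ)} {c : ℝ}
    (h : ∀ x : ℕ → ℝ, Feasible x → lagEval E x ≤ c) : lagrangian E ≤ c := by
  obtain ⟨x, hx⟩ := exists_feasible
  exact csSup_le ⟨_, x, hx, rfl⟩ (by rintro _ ⟨x, hx, rfl⟩; exact h x hx)

lemma lagEval_image_map (F : Finset (Finset ℕ)) (σ : Equiv.Perm ℕ) (x : ℕ → ℝ) :
    lagEval (F.image (·.map σ.toEmbedding)) x = lagEval F (x ∘ σ) := by
  rw [lagEval, sum_image fun _ _ _ _ h => map_injective _ h]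
  simp [lagEval, prod_map]

lemma ContainsCliqueOn.of_image_map {V : Finset ℕ} {r s : ℕ} {F : Finset (Finset ℕ)}
    {σ : Equiv.Perm ℕ} (hσ : ∀ i, σ i ∈ V ↔ i ∈ V)
    (h : ContainsCliqueOn V r s (F.image (·.map σ.toEmbedding))) : ContainsCliqueOn V r s F := by
  obtain ⟨S, hSV, hS, hSF⟩ := h
  refine ⟨S.map σ.symm.toEmbedding, fun i hi => ?_, by rw [card_map, hS], fun χ hχ => ?_⟩
  · rw [mem_map_equiv, Equiv.symm_symm] at hi
    exact (hσ i).1 (hSV hi)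
  obtain ⟨hχS, hχr⟩ := mem_powersetCard.1 hχ
  have hχσ : χ.map σ.toEmbedding ∈ S.powersetCard r := by
    refine mem_powersetCard.2 ⟨fun z hz => ?_, by rw [card_map, hχr]⟩
    rw [mem_map_equiv] at hz
    simpa using hχS hz
  obtain ⟨e, he, hee⟩ := mem_image.1 (hSF hχσ)
  exact map_injective _ hee ▸ he

lemma exists_perm_antitoneOn {α β : Type*} [LinearOrder α] [LinearOrder β] (s : Finset α)
    (x : α → β) : ∃ σ : Equiv.Perm α, (∀ i, σ i ∈ s ↔ i ∈ s) ∧ AntitoneOn (x ∘ σ) s := by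
  classical
  set e := s.orderIsoOfFin rfl
  set f : Fin #s → βᵒᵈ := fun k => OrderDual.toDual (x (e k))
  have hσ : ∀ i (hi : i ∈ s), (Tuple.sort f).extendDomain e.toEquiv i =
      e (Tuple.sort f (e.symm ⟨i, hi⟩)) := fun i hi =>
    Equiv.Perm.extendDomain_apply_subtype _ _ hi
  refine ⟨(Tuple.sort f).extendDomain e.toEquiv, fun i => ?_, fun i hi j hj hij => ?_⟩
  · by_cases hi : i ∈ s
    · simp only [hσ i hi, coe_mem, hi]
    · rw [Equiv.Perm.extendDomain_apply_not_subtype _ _ hi]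
  · simp only [Function.comp_apply, hσ i hi, hσ j hj]
    exact Tuple.monotone_sort f (e.symm.monotone (Subtype.mk_le_mk.2 hij))

lemma exists_leftCompressed_lagEval_le_lagrangian {r t : ℕ} {F : Finset (Finset ℕ)}
    (hrt : r < t) (hF : F ⊆ completeG t r) (hcf : ¬ContainsCliqueOn (Icc 1 t) r (t - 1) F)
    (hM : (t - 2).choose (r - 2) + r + 2 ≤ #(completeG t r \ F)) {x : ℕ → ℝ} (hx : Feasible x) :
    ∃ G ⊆ completeG t r, #G = #F ∧ ¬ContainsCliqueOn (Icc 1 t) r (t - 1) G ∧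
      LeftCompressed G ∧ lagEval F x ≤ lagrangian G := by
  obtain ⟨σ, hσ, hxσ⟩ := exists_perm_antitoneOn (Icc 1 t) x
  have hσ' : ∀ i, σ.symm i ∈ Icc 1 t ↔ i ∈ Icc 1 t := fun i => by
    simpa using (hσ (σ.symm i)).symm
  set F' := F.image (·.map σ.symm.toEmbedding)
  have hF' : F' ⊆ completeG t r := fun e' he' => by
    obtain ⟨e, he, rfl⟩ := mem_image.1 he'
    obtain ⟨het, her⟩ := mem_completeG.1 (hF he)
    refine mem_completeG.2 ⟨fun i hi => ?_, by rw [card_map, her]⟩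
    rw [mem_map_equiv, Equiv.symm_symm] at hi
    exact (hσ i).1 (het hi)
  have hF'F : #F' = #F := card_image_of_injective _ (map_injective _)
  have hlag : lagEval F' (x ∘ σ) = lagEval F x := by
    rw [lagEval_image_map]
    congr 1
    ext i
    simp
  obtain ⟨G, hG, hGF', hGcf, hGc, hF'G⟩ := exists_leftCompressed_lagEval_le hrt hF'
    (fun h => hcf (h.of_image_map hσ'))
    (by rwa [card_sdiff_of_subset hF', hF'F, ← card_sdiff_of_subset hF]) (fun i => hx.1 (σ i))
    (by rw [← coe_Icc]; exact hxσ)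
  exact ⟨G, hG, hGF'.trans hF'F, hGcf, hGc,
    hlag ▸ hF'G.trans (lagEval_le_lagrangian G (hx.comp_perm σ))⟩

lemma choose_add_le_choose {r m t : ℕ} (hr : 4 ≤ r) (hrt : r < t)
    (h1 : (t - 1).choose r ≤ m)
    (h2 : m ≤ (t - 1).choose r + (t - 2).choose (r - 1) -
      ((2 * r - 6) * 2 ^ (r - 1) + 2 ^ (r - 3) + (r - 4) * (2 * r - 7) - 1) *
        ((t - 2).choose (r - 2) - 1)) :
    (t - 2).choose (r - 2) + r + 2 + m ≤ t.choose r := by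
  set K := (2 * r - 6) * 2 ^ (r - 1) + 2 ^ (r - 3) + (r - 4) * (2 * r - 7) - 1
  set C := (t - 2).choose (r - 2)
  have hK : r + 2 ≤ K := by
    have h₁ : r - 1 < 2 ^ (r - 1) := Nat.lt_two_pow_self
    have h₂ : 2 * 2 ^ (r - 1) ≤ (2 * r - 6) * 2 ^ (r - 1) := Nat.mul_le_mul_right _ (by omega)
    have h₃ : 1 ≤ 2 ^ (r - 3) := Nat.one_le_two_pow
    omega
  have hC : r - 1 ≤ C := by
    have := Nat.choose_le_choose (r - 2) (show r - 2 + 1 ≤ t - 2 by omega)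
    rwa [Nat.choose_succ_self_right, show r - 2 + 1 = r - 1 by omega] at this
  have hQ : r + 2 ≤ K * (C - 1) := hK.trans (Nat.le_mul_of_pos_right K (by omega))
  have hpascal : t.choose r = (t - 1).choose r + (t - 2).choose (r - 1) + C := by
    rw [Nat.choose_eq_choose_pred_add (by omega : 0 < t) (by omega : 0 < r),
      Nat.choose_eq_choose_pred_add (by omega : 0 < t - 1) (by omega : 0 < r - 1)]
    simp only [C, show t - 1 - 1 = t - 2 by omega, show r - 1 - 1 = r - 2 by omega]
    ring
  have hpos : 0 < (t - 1).choose r := Nat.choose_pos (by omega)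
  generalize K * (C - 1) = Q at h2 hQ
  omega

lemma exists_leftCompressed_forall_lagrangian_le {r t m : ℕ} (hrt : r < t)
    (hroom : (t - 2).choose (r - 2) + r + 2 + m ≤ t.choose r) :
    ∃ E ⊆ completeG t r, #E = m ∧ ¬ContainsCliqueOn (Icc 1 t) r (t - 1) E ∧ LeftCompressed E ∧
      ∀ F ⊆ completeG t r, #F = m → ¬ContainsCliqueOn (Icc 1 t) r (t - 1) F →
        lagrangian F ≤ lagrangian E := by
  classical
  set T := (completeG t r).powerset.filter fun G =>
    #G = m ∧ ¬ContainsCliqueOn (Icc 1 t) r (t - 1) G ∧ LeftCompressed G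
  have hT : ∀ F ⊆ completeG t r, #F = m → ¬ContainsCliqueOn (Icc 1 t) r (t - 1) F →
      ∀ x, Feasible x → ∃ G ∈ T, lagEval F x ≤ lagrangian G := fun F hF hFm hcf x hx => by
    obtain ⟨G, hG, hGF, hGcf, hGc, hFG⟩ := exists_leftCompressed_lagEval_le_lagrangian hrt hF hcf
      (by rw [card_sdiff_of_subset hF, card_completeG, hFm]; omega) hx
    exact ⟨G, mem_filter.2 ⟨mem_powerset.2 hG, hGF.trans hFm, hGcf, hGc⟩, hFG⟩
  obtain ⟨F₀, hF₀, hF₀m, hF₀cf⟩ := exists_card_eq_not_containsCliqueOn hrt (m := m) (by omega)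
  obtain ⟨x₀, hx₀⟩ := exists_feasible
  obtain ⟨G₀, hG₀, -⟩ := hT F₀ hF₀ hF₀m hF₀cf x₀ hx₀
  obtain ⟨E, hET, hEmax⟩ := T.exists_max_image lagrangian ⟨G₀, hG₀⟩
  simp only [T, mem_filter, mem_powerset] at hET
  obtain ⟨hE, hEm, hEcf, hEc⟩ := hET
  refine ⟨E, hE, hEm, hEcf, hEc, fun F hF hFm hFcf => lagrangian_le fun x hx => ?_⟩
  obtain ⟨G, hGT, hFG⟩ := hT F hF hFm hFcf x hx
  exact hFG.trans (hEmax G hGT)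

/-- For `r ≥ 4` and `m` in the stated range, there is a left-compressed r-graph on
`[t]` with `m` edges, not containing `[t−1]^{(r)}`, whose Lagrangian equals
`λ^{r−}_{(m,t−1,t)}`: the maximum Lagrangian over all r-graphs with `t` vertices
and `m` edges containing no clique of order `t−1`. -/
theorem stmt11 (r m t : ℕ) (hr : 4 ≤ r) (hrt : r < t)
    (h1 : (t - 1).choose r ≤ m)
    (h2 : m ≤ (t - 1).choose r + (t - 2).choose (r - 1) -
      ((2 * r - 6) * 2 ^ (r - 1) + 2 ^ (r - 3) + (r - 4) * (2 * r - 7) - 1) *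
        ((t - 2).choose (r - 2) - 1)) :
    ∃ E : Finset (Finset ℕ), IsRGraphOn r t E ∧ E.card = m ∧ LeftCompressed E ∧
      ¬ completeG (t - 1) r ⊆ E ∧
      lagrangian E = sSup {y : ℝ | ∃ F : Finset (Finset ℕ),
        IsRGraphOn r t F ∧ F.card = m ∧
        ¬ ContainsCliqueOn (Finset.Icc 1 t) r (t - 1) F ∧ lagrangian F = y} := by
  obtain ⟨E, hE, hEm, hEcf, hEc, hEmax⟩ :=
    exists_leftCompressed_forall_lagrangian_le hrt (choose_add_le_choose hr hrt h1 h2)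
  have hEK : ¬completeG (t - 1) r ⊆ E := fun hsub =>
    hEcf ⟨Icc 1 (t - 1), Icc_subset_Icc_right (Nat.sub_le t 1), by simp, hsub⟩
  refine ⟨E, isRGraphOn_iff_subset_completeG.2 hE, hEm, hEc, hEK, Eq.symm <| IsGreatest.csSup_eq
    ⟨⟨E, isRGraphOn_iff_subset_completeG.2 hE, hEm, hEcf, rfl⟩, ?_⟩⟩
  rintro _ ⟨F, hF, hFm, hFcf, rfl⟩
  exact hEmax F (isRGraphOn_iff_subset_completeG.1 hF) hFm hFcf
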